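/- Let C be a bivariate copula concentrated on the two diagonals with diagonal δ(u) = C(u,u), let α(u) = ∫₀ᵘ δ(t) dt, let p = φ(C) (which lies in [−1/2, 1]), and set u₀ = (1/2)·(1 − √(2p+1)/√3) ∈ [0, 1/2]. Then for every u ∈ [0, 1/2]: α(u) ≥ 0, and if u₀ < u ≤ 1/2 then α(u) ≥ (1/2)·(u − u₀)². -/

import Mathlib

open MeasureTheory Set

noncomputable section

/-- A bivariate copula on `[0,1]²`. -/
def IsCopula (C : ℝ → ℝ → ℝ) : Prop :=
  (∀ u ∈ Icc (0:ℝ) 1, ∀ v ∈ Icc (0:ℝ) 1, C u v ∈ Icc (0:ℝ) 1) ∧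
  (∀ u ∈ Icc (0:ℝ) 1, C u 0 = 0 ∧ C 0 u = 0 ∧ C u 1 = u ∧ C 1 u = u) ∧
  (∀ u₁ u₂ v₁ v₂ : ℝ, 0 ≤ u₁ → u₁ ≤ u₂ → u₂ ≤ 1 → 0 ≤ v₁ → v₁ ≤ v₂ → v₂ ≤ 1 →
    0 ≤ C u₂ v₂ - C u₂ v₁ - C u₁ v₂ + C u₁ v₁)

/-- Spearman's rho of a copula. -/
def spearmanRho (C : ℝ → ℝ → ℝ) : ℝ :=
  12 * (∫ u in (0:ℝ)..1, ∫ v in (0:ℝ)..1, C u v) - 3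

/-- Spearman's footrule of a copula. -/
def spearmanFootrule (C : ℝ → ℝ → ℝ) : ℝ :=
  6 * (∫ u in (0:ℝ)..1, C u u) - 2

/-- A copula whose mass is concentrated on the main and opposite diagonal:
its values are determined by its diagonal `δ(u) = C(u,u)` as stated. -/
def ConcentratedOnDiagonals (C : ℝ → ℝ → ℝ) : Prop :=
  ∀ u ∈ Icc (0:ℝ) 1, ∀ v ∈ Icc (0:ℝ) 1,
    (u ≤ v → v ≤ 1 - u → C u v = C u u) ∧
    (v ≤ u → u ≤ 1 - v → C u v = C v v) ∧
    (1 - u ≤ v → v ≤ u → C u v = C u u + v - u) ∧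
    (1 - v ≤ u → u ≤ v → C u v = C v v + u - v)

/-!
Write `δ t = C t t`. Concentration on the two diagonals gives the reflection rule
`δ (1 - t) = δ t + 1 - 2 t`, so `φ(C) = 12 α(1/2) - 1/2`; together with `0 ≤ δ t ≤ t` this puts
`α(1/2)` in `[0, 1/8]`, and `u₀` is exactly `(1 - √(8 α(1/2))) / 2`. The 2-increasing property on
the rectangle `[t, t'] × [1 - t', 1 - t]`, whose corner values are all read off the diagonal, shows
that `δ` has slope at most one on `[0, 1/2]`. Hence `α u ≥ δ(u)² / 2` (integrate over
`[u - δ u, u]`) and `α u ≥ α(1/2) - δ u (1/2 - u) - (1/2 - u)² / 2` (integrate over `[u, 1/2]`);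
according as `δ u ≥ u - u₀` or not, one of the two bounds is at least `(u - u₀)² / 2`.
-/

lemma sq_div_two_le_integral_of_le_add {f : ℝ → ℝ} {a b : ℝ} (hab : a ≤ b)
    (hf : IntervalIntegrable f volume a b) (hf0 : ∀ t ∈ Icc a b, 0 ≤ f t)
    (hfb : f b ≤ b - a) (hlip : ∀ t ∈ Icc a b, f b ≤ f t + (b - t)) :
    f b ^ 2 / 2 ≤ ∫ t in a..b, f t := by
  set m := b - f b
  have hfb0 : 0 ≤ f b := hf0 b ⟨hab, le_rfl⟩
  have ham : a ≤ m := by linarith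
  have hmb : m ≤ b := by linarith
  have hsub : ∀ {c d}, a ≤ c → c ≤ d → d ≤ b → IntervalIntegrable f volume c d :=
    fun hc hcd hd => hf.mono_set (by rw [uIcc_of_le hcd, uIcc_of_le hab]; exact Icc_subset_Icc hc hd)
  have hleft : 0 ≤ ∫ t in a..m, f t :=
    intervalIntegral.integral_nonneg ham fun t ht => hf0 t ⟨ht.1, ht.2.trans hmb⟩
  have hright : ∫ t in m..b, (t - m) ≤ ∫ t in m..b, f t :=
    intervalIntegral.integral_mono_on hmb ((continuous_sub_right m).intervalIntegrable m b)
      (hsub ham hmb le_rfl)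
      fun t ht => by linarith [hlip t ⟨ham.trans ht.1, ht.2⟩]
  have hlin : ∫ t in m..b, (t - m) = f b ^ 2 / 2 := by
    simp only [intervalIntegral.integral_comp_sub_right (fun t => t), integral_id, sub_self, m]
    ring
  rw [← intervalIntegral.integral_add_adjacent_intervals (hsub le_rfl ham hmb)
    (hsub ham hmb le_rfl)]
  linarith

lemma integral_le_of_le_add {f : ℝ → ℝ} {a b : ℝ} (hab : a ≤ b)
    (hf : IntervalIntegrable f volume a b) (hlip : ∀ t ∈ Icc a b, f t ≤ f a + (t - a)) :
    ∫ t in a..b, f t ≤ f a * (b - a) + (b - a) ^ 2 / 2 := by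
  calc ∫ t in a..b, f t ≤ ∫ t in a..b, (f a + (t - a)) :=
        intervalIntegral.integral_mono_on hab hf
          (Continuous.intervalIntegrable (by fun_prop) a b) hlip
    _ = f a * (b - a) + (b - a) ^ 2 / 2 := by
        simp only [intervalIntegral.integral_add intervalIntegrable_const
          ((continuous_sub_right a).intervalIntegrable a b), intervalIntegral.integral_const,
          intervalIntegral.integral_comp_sub_right (fun t => t), integral_id, smul_eq_mul, sub_self]
        ring

namespace IsCopula

variable {C : ℝ → ℝ → ℝ}

lemma diag_nonneg (hC : IsCopula C) {t : ℝ} (ht : t ∈ Icc (0:ℝ) 1) : 0 ≤ C t t :=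
  (hC.1 t ht t ht).1

lemma diag_le (hC : IsCopula C) {t : ℝ} (ht : t ∈ Icc (0:ℝ) 1) : C t t ≤ t := by
  have h := hC.2.2 t 1 0 t ht.1 ht.2 le_rfl le_rfl ht.1 ht.2
  have h1t : C 1 t = t := (hC.2.1 t ht).2.2.2
  have h10 : C 1 0 = 0 := (hC.2.1 1 ⟨zero_le_one, le_rfl⟩).1
  have ht0 : C t 0 = 0 := (hC.2.1 t ht).1
  linarith

lemma monotoneOn_diag (hC : IsCopula C) : MonotoneOn (fun t => C t t) (Icc 0 1) := by
  intro a ha b hb hab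
  have h₁ := hC.2.2 a b 0 a ha.1 hab hb.2 le_rfl ha.1 ha.2
  have h₂ := hC.2.2 0 b a b le_rfl hb.1 hb.2 ha.1 hab hb.2
  have ha0 : C a 0 = 0 := (hC.2.1 a ha).1
  have hb0 : C b 0 = 0 := (hC.2.1 b hb).1
  have h0b : C 0 b = 0 := (hC.2.1 b hb).2.1
  have h0a : C 0 a = 0 := (hC.2.1 a ha).2.1
  dsimp only
  linarith

lemma intervalIntegrable_diag (hC : IsCopula C) {a b : ℝ} (ha : 0 ≤ a) (hab : a ≤ b)
    (hb : b ≤ 1) : IntervalIntegrable (fun t => C t t) volume a b :=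
  (hC.monotoneOn_diag.mono (by rw [uIcc_of_le hab]; exact Icc_subset_Icc ha hb)).intervalIntegrable

lemma integral_diag_nonneg (hC : IsCopula C) {u : ℝ} (hu : u ∈ Icc (0:ℝ) 1) :
    0 ≤ ∫ t in (0:ℝ)..u, C t t :=
  intervalIntegral.integral_nonneg hu.1 fun _ ht => hC.diag_nonneg ⟨ht.1, ht.2.trans hu.2⟩

lemma integral_diag_le (hC : IsCopula C) {u : ℝ} (hu : u ∈ Icc (0:ℝ) 1) :
    ∫ t in (0:ℝ)..u, C t t ≤ u ^ 2 / 2 := by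
  calc ∫ t in (0:ℝ)..u, C t t ≤ ∫ t in (0:ℝ)..u, t :=
        intervalIntegral.integral_mono_on hu.1 (hC.intervalIntegrable_diag le_rfl hu.1 hu.2)
          (continuous_id.intervalIntegrable 0 u)
          fun t ht => hC.diag_le ⟨ht.1, ht.2.trans hu.2⟩
    _ = u ^ 2 / 2 := by simp [integral_id]

end IsCopula

namespace ConcentratedOnDiagonals

variable {C : ℝ → ℝ → ℝ}

lemma diag_one_sub (hD : ConcentratedOnDiagonals C) {t : ℝ} (ht : t ∈ Icc (0:ℝ) (1/2)) :
    C (1 - t) (1 - t) = C t t + 1 - 2 * t := by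
  have hD' := hD (1 - t) ⟨by linarith [ht.2], by linarith [ht.1]⟩ t ⟨ht.1, by linarith [ht.2]⟩
  have h₁ : C (1 - t) t = C t t := hD'.2.1 (by linarith [ht.2]) le_rfl
  have h₂ : C (1 - t) t = C (1 - t) (1 - t) + t - (1 - t) :=
    hD'.2.2.1 (by linarith) (by linarith [ht.2])
  linarith

lemma diag_le_diag_add_sub (hC : IsCopula C) (hD : ConcentratedOnDiagonals C) {t t' : ℝ}
    (ht : 0 ≤ t) (htt' : t ≤ t') (ht' : t' ≤ 1/2) : C t' t' ≤ C t t + (t' - t) := by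
  have h := hC.2.2 t t' (1 - t') (1 - t) ht htt' (by linarith) (by linarith) (by linarith)
    (by linarith)
  have ht₁ : t ∈ Icc (0:ℝ) 1 := ⟨ht, by linarith⟩
  have ht'₁ : t' ∈ Icc (0:ℝ) 1 := ⟨by linarith, by linarith⟩
  have h1t : 1 - t ∈ Icc (0:ℝ) 1 := ⟨by linarith, by linarith⟩
  have h1t' : 1 - t' ∈ Icc (0:ℝ) 1 := ⟨by linarith, by linarith⟩
  have e₁ : C t' (1 - t) = C (1 - t) (1 - t) + t' - (1 - t) :=
    (hD t' ht'₁ (1 - t) h1t).2.2.2 (by linarith) (by linarith)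
  have e₂ : C t' (1 - t') = C t' t' := (hD t' ht'₁ (1 - t') h1t').1 (by linarith) le_rfl
  have e₃ : C t (1 - t) = C t t := (hD t ht₁ (1 - t) h1t).1 (by linarith) le_rfl
  have e₄ : C t (1 - t') = C t t := (hD t ht₁ (1 - t') h1t').1 (by linarith) (by linarith)
  have e₅ := hD.diag_one_sub ⟨ht, htt'.trans ht'⟩
  linarith

lemma integral_diag_zero_one (hC : IsCopula C) (hD : ConcentratedOnDiagonals C) :
    ∫ t in (0:ℝ)..1, C t t = 2 * (∫ t in (0:ℝ)..1/2, C t t) + 1/4 := by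
  have hreflect : ∫ t in (1/2:ℝ)..1, C t t = ∫ t in (0:ℝ)..1/2, (C t t + (1 - 2 * t)) := by
    have h := intervalIntegral.integral_comp_sub_left (fun t => C t t) (1:ℝ) (a := 0) (b := 1/2)
    norm_num at h
    rw [← h]
    refine intervalIntegral.integral_congr fun t ht => ?_
    rw [uIcc_of_le (by norm_num)] at ht
    simp only [hD.diag_one_sub ht]
    ring
  have hlin : ∫ t in (0:ℝ)..1/2, (1 - 2 * t) = 1/4 := by
    rw [intervalIntegral.integral_sub intervalIntegrable_const
      (Continuous.intervalIntegrable (by fun_prop) _ _), intervalIntegral.integral_const_mul]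
    norm_num [integral_id]
  have hint := hC.intervalIntegrable_diag le_rfl (by norm_num) (by norm_num : (1/2:ℝ) ≤ 1)
  rw [← intervalIntegral.integral_add_adjacent_intervals hint
    (hC.intervalIntegrable_diag (by norm_num) (by norm_num) le_rfl), hreflect,
    intervalIntegral.integral_add hint (Continuous.intervalIntegrable (by fun_prop) _ _), hlin]
  ring

lemma spearmanFootrule_eq (hC : IsCopula C) (hD : ConcentratedOnDiagonals C) :
    spearmanFootrule C = 12 * (∫ t in (0:ℝ)..1/2, C t t) - 1/2 := by
  rw [spearmanFootrule, hD.integral_diag_zero_one hC]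
  ring

lemma sq_diag_div_two_le_integral (hC : IsCopula C) (hD : ConcentratedOnDiagonals C) {u : ℝ}
    (hu : u ∈ Icc (0:ℝ) (1/2)) : C u u ^ 2 / 2 ≤ ∫ t in (0:ℝ)..u, C t t := by
  have hu₁ : u ∈ Icc (0:ℝ) 1 := ⟨hu.1, by linarith [hu.2]⟩
  refine sq_div_two_le_integral_of_le_add hu.1 (hC.intervalIntegrable_diag le_rfl hu₁.1 hu₁.2)
    (fun t ht => hC.diag_nonneg ⟨ht.1, ht.2.trans hu₁.2⟩) ?_
    fun t ht => by linarith [hD.diag_le_diag_add_sub hC ht.1 ht.2 hu.2]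
  simpa using hC.diag_le hu₁

lemma integral_diag_half_le (hC : IsCopula C) (hD : ConcentratedOnDiagonals C) {u : ℝ}
    (hu : u ∈ Icc (0:ℝ) (1/2)) :
    ∫ t in (0:ℝ)..1/2, C t t ≤
      (∫ t in (0:ℝ)..u, C t t) + C u u * (1/2 - u) + (1/2 - u) ^ 2 / 2 := by
  have hright := integral_le_of_le_add hu.2
    (hC.intervalIntegrable_diag hu.1 hu.2 (by norm_num))
    fun t ht => hD.diag_le_diag_add_sub hC hu.1 ht.1 ht.2
  rw [← intervalIntegral.integral_add_adjacent_intervals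
    (hC.intervalIntegrable_diag le_rfl hu.1 (by linarith [hu.2]))
    (hC.intervalIntegrable_diag hu.1 hu.2 (by norm_num))]
  linarith

end ConcentratedOnDiagonals

lemma sq_div_two_le_of_max_bounds {x c d s : ℝ} (hd : 0 ≤ d) (hs : 0 ≤ s)
    (h₁ : c ^ 2 / 2 ≤ x) (h₂ : (d + s) ^ 2 / 2 - c * s - s ^ 2 / 2 ≤ x) : d ^ 2 / 2 ≤ x := by
  rcases le_or_gt d c with hdc | hcd
  · nlinarith
  · nlinarith

theorem alpha_lower_bound (C : ℝ → ℝ → ℝ) (hC : IsCopula C)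
    (hD : ConcentratedOnDiagonals C)
    (α : ℝ → ℝ) (hα : ∀ u : ℝ, α u = ∫ t in (0:ℝ)..u, C t t)
    (p : ℝ) (hp : p = spearmanFootrule C)
    (u₀ : ℝ) (hu₀ : u₀ = (1/2) * (1 - Real.sqrt (2*p + 1) / Real.sqrt 3)) :
    p ∈ Icc (-(1:ℝ)/2) 1 ∧ u₀ ∈ Icc (0:ℝ) (1/2) ∧
    ∀ u ∈ Icc (0:ℝ) (1/2), 0 ≤ α u ∧ (u₀ < u → (1/2) * (u - u₀)^2 ≤ α u) := by
  set A := ∫ t in (0:ℝ)..1/2, C t t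
  have hpA : p = 12 * A - 1/2 := hp ▸ hD.spearmanFootrule_eq hC
  have hA0 : 0 ≤ A := hC.integral_diag_nonneg ⟨by norm_num, by norm_num⟩
  have hA8 : A ≤ 1/8 := by
    have := hC.integral_diag_le (u := 1/2) ⟨by norm_num, by norm_num⟩
    norm_num at this
    linarith
  have hsqrt : Real.sqrt (2*p + 1) / Real.sqrt 3 = Real.sqrt (8 * A) := by
    rw [← Real.sqrt_div' _ (by norm_num), hpA]
    ring_nf
  rw [hsqrt] at hu₀
  have hr₀ := Real.sqrt_nonneg (8 * A)
  have hr₁ : Real.sqrt (8 * A) ≤ 1 := Real.sqrt_le_one.mpr (by linarith)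
  have hr₂ : Real.sqrt (8 * A) ^ 2 = 8 * A := Real.sq_sqrt (by linarith)
  refine ⟨⟨by linarith, by linarith⟩, ⟨by linarith, by linarith⟩,
    fun u hu => ⟨?_, fun hu₀u => ?_⟩⟩
  · rw [hα]
    exact hC.integral_diag_nonneg ⟨hu.1, by linarith [hu.2]⟩
  · have hA : (u - u₀ + (1/2 - u)) ^ 2 / 2 = A := by
      rw [hu₀]
      linear_combination hr₂ / 8
    have := sq_div_two_le_of_max_bounds (c := C u u) (d := u - u₀) (s := 1/2 - u) (by linarith)
      (by linarith [hu.2]) (hD.sq_diag_div_two_le_integral hC hu)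
      (by linarith [hD.integral_diag_half_le hC hu])
    rw [hα]
    linarith
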